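/- For every integer k ≥ 1 there exists a finite bipartite graph G with 2k − 2 < MAD(G) < 2k (so ⌈MAD(G)/2⌉ = k) and χ⃗(G) = k + 3; hence the bound χ⃗(G) ≤ ⌈MAD(G)/2⌉ + 3 for bipartite graphs is tight. -/

import Mathlib

open SimpleGraph Finset

/-- An orientation of a simple graph `G`: each edge gets exactly one direction. -/
structure GOrientation {V : Type*} (G : SimpleGraph V) where
  dir : V → V → Bool
  adj_iff : ∀ u v, G.Adj u v ↔ (dir u v = true ∨ dir v u = true)
  not_both : ∀ u v, ¬(dir u v = true ∧ dir v u = true)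

def GOrientation.outDeg {V : Type*} [Fintype V] {G : SimpleGraph V}
    (o : GOrientation G) (u : V) : ℕ :=
  (Finset.univ.filter fun v => o.dir u v = true).card

def GOrientation.inDeg {V : Type*} [Fintype V] {G : SimpleGraph V}
    (o : GOrientation G) (u : V) : ℕ :=
  (Finset.univ.filter fun v => o.dir v u = true).card

/-- A proper orientation: adjacent vertices get distinct outdegrees. -/
def GOrientation.IsProper {V : Type*} [Fintype V] {G : SimpleGraph V}
    (o : GOrientation G) : Prop :=
  ∀ u v, G.Adj u v → o.outDeg u ≠ o.outDeg v

/-- Maximum average degree: sup over nonempty subgraphs of 2|E(H)|/|V(H)|. -/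
noncomputable def mad {V : Type*} [Fintype V] (G : SimpleGraph V) : ℝ :=
  sSup {x : ℝ | ∃ H : G.Subgraph, H.verts.Nonempty ∧
    x = 2 * H.edgeSet.ncard / H.verts.ncard}

/-- `H` is a minor of `G`: disjoint nonempty connected branch sets with edges realized. -/
def HasMinor {V W : Type*} (G : SimpleGraph V) (H : SimpleGraph W) : Prop :=
  ∃ B : W → Set V,
    (∀ w, (B w).Nonempty) ∧
    (∀ w, (G.induce (B w)).Connected) ∧
    (∀ w₁ w₂, w₁ ≠ w₂ → Disjoint (B w₁) (B w₂)) ∧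
    (∀ w₁ w₂, H.Adj w₁ w₂ → ∃ u ∈ B w₁, ∃ v ∈ B w₂, G.Adj u v)

/-- Planarity via Wagner's theorem: no `K₅` and no `K_{3,3}` minor. -/
def IsPlanar {V : Type*} (G : SimpleGraph V) : Prop :=
  ¬ HasMinor G (completeGraph (Fin 5)) ∧
  ¬ HasMinor G (completeBipartiteGraph (Fin 3) (Fin 3))

/-- Outerplanarity: no `K₄` and no `K_{2,3}` minor. -/
def IsOuterplanar {V : Type*} (G : SimpleGraph V) : Prop :=
  ¬ HasMinor G (completeGraph (Fin 4)) ∧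
  ¬ HasMinor G (completeBipartiteGraph (Fin 2) (Fin 3))

namespace Stmt17


/-! ### generic counting helpers -/

lemma card_filter_sum {α β : Type*} [Fintype α] [Fintype β] (p : α ⊕ β → Prop) [DecidablePred p] :
    (univ.filter p).card = (univ.filter fun a => p (Sum.inl a)).card
      + (univ.filter fun b => p (Sum.inr b)).card := by
  classical
  have : (univ.filter p)
      = ((univ.filter fun a => p (Sum.inl a)).disjSum (univ.filter fun b => p (Sum.inr b))) := by
    ext x; cases x <;> simp
  rw [this, Finset.card_disjSum]

lemma card_filter_fst {γ δ : Type*} [Fintype γ] [Fintype δ] [DecidableEq γ]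
    (c : γ) (p : γ × δ → Prop) [DecidablePred p] (h : ∀ x, p x → x.1 = c) :
    (univ.filter p).card = (univ.filter fun q : δ => p (c, q)).card := by
  classical
  apply Finset.card_nbij' (fun x => x.2) (fun q => (c, q))
  · intro a ha; simp only [mem_coe, mem_filter, mem_univ, true_and] at *
    have := h a ha; rwa [show ((c : γ), a.2) = a by rw [← this]]
  · intro q hq; simp only [mem_coe, mem_filter, mem_univ, true_and] at *; exact hq
  · intro a ha; simp only [mem_coe, mem_filter, mem_univ, true_and] at ha
    have := h a ha; ext <;> simp [this.symm]
  · intro q hq; rfl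

lemma card_filter_snd {γ δ : Type*} [Fintype γ] [Fintype δ] [DecidableEq δ]
    (d : δ) (p : γ × δ → Prop) [DecidablePred p] (h : ∀ x, p x → x.2 = d) :
    (univ.filter p).card = (univ.filter fun c : γ => p (c, d)).card := by
  classical
  apply Finset.card_nbij' (fun x => x.1) (fun c => (c, d))
  · intro a ha; simp only [mem_coe, mem_filter, mem_univ, true_and] at *
    have := h a ha; rwa [show ((a.1 : γ), d) = a by rw [← this]]
  · intro q hq; simp only [mem_coe, mem_filter, mem_univ, true_and] at *; exact hq
  · intro a ha; simp only [mem_coe, mem_filter, mem_univ, true_and] at ha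
    have := h a ha; ext <;> simp [this.symm]
  · intro q hq; rfl

lemma card_filter_zero {α : Type*} [Fintype α] (p : α → Prop) [DecidablePred p]
    (h : ∀ x, ¬ p x) : (univ.filter p).card = 0 := by
  rw [Finset.card_eq_zero]; ext x; simp [h x]


/-! ### Template tree tables -/

/-- parent table for the 48-vertex template tree. -/
def par : Fin 48 → Fin 48 :=
  ![0,0,0,0,0,0,0,0,  2,3,  4,5,6,  4,4,5,5,6,6,  13,14,15,16,17,18,
    7,7,7,7,7,7,  26,27,  28,29,30,  28,28,29,29,30,30,  36,37,38,39,40,41]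

/-- depth table. -/
def dep : Fin 48 → ℕ :=
  ![0,1,1,1,1,1,1,1,  2,2,  2,2,2,  2,2,2,2,2,2,  3,3,3,3,3,3,
    2,2,2,2,2,2,  3,3,  3,3,3,  3,3,3,3,3,3,  4,4,4,4,4,4]

/-- whether the template edge from `p` to its parent is directed towards the parent,
in the model orientation. -/
def give : Fin 48 → Bool :=
  ![false,true,true,true,false,false,false,false,  false,false,  true,true,true,
    false,false,false,false,false,false,  false,false,false,false,false,false,
    true,true,true,false,false,false,  false,false,  true,true,true,
    false,false,false,false,false,false,  false,false,false,false,false,false]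

/-- template out-degree of each position in the model orientation. -/
def vT : Fin 48 → ℕ :=
  ![4,1,2,2,2,2,2,3,  0,0,  1,1,1,  1,1,1,1,1,1,  0,0,0,0,0,0,
    1,2,2,2,2,2,  0,0,  1,1,1,  1,1,1,1,1,1,  0,0,0,0,0,0]

lemma dep_par : ∀ q : Fin 48, q ≠ 0 → dep (par q) < dep q := by decide
lemma par_ne_self : ∀ q : Fin 48, q ≠ 0 → par q ≠ q := by decide
lemma no_two_cycle : ∀ p q : Fin 48, p ≠ 0 → par p = q → q ≠ 0 → par q = p → False := by decide
lemma vT_par : ∀ q : Fin 48, q ≠ 0 → vT (par q) ≠ vT q := by decide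
lemma vT_le : ∀ p : Fin 48, vT p ≤ 4 := by decide
lemma vT_give : ∀ p : Fin 48,
    vT p = (if give p then 1 else 0) + (univ.filter fun q => q ≠ 0 ∧ par q = p ∧ give q = false).card := by
  decide
lemma dep_mod_par : ∀ q : Fin 48, q ≠ 0 → dep (par q) % 2 ≠ dep q % 2 := by decide

section Graph

variable (k : ℕ)

def mm : ℕ := 2*k - 1
def ss : ℕ := 48*(k-1)*(k+2) + 1

/-- Vertex type: complete bipartite part ⊕ (template copies ⊕ core dummies). -/
abbrev V := (Fin (mm k) ⊕ Fin (mm k)) ⊕ ((Fin (ss k) × Fin 48) ⊕ (Fin 48 × Fin (k-1)))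

/-- Adjacency relation. -/
def rel : V k → V k → Prop
  | .inl (.inl _), .inl (.inr _) => True
  | .inl (.inr _), .inl (.inl _) => True
  | .inr (.inl (c,p)), .inr (.inl (c',q)) =>
      c = c' ∧ ((q ≠ 0 ∧ par q = p) ∨ (p ≠ 0 ∧ par p = q))
  | .inr (.inl (_,p)), .inr (.inr (q,_)) => p = q
  | .inr (.inr (q,_)), .inr (.inl (_,p)) => p = q
  | _, _ => False

lemma rel_symm : ∀ {u v : V k}, rel k u v → rel k v u := by
  rintro ((i|j)|(⟨c,p⟩|⟨q,x⟩)) ((i'|j')|(⟨c',p'⟩|⟨q',x'⟩)) h <;>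
    simp only [rel] at h ⊢ <;>
    first
      | trivial
      | exact ⟨h.1.symm, h.2.symm⟩
      | exact h
      | exact h.symm

lemma rel_irrefl : ∀ v : V k, ¬ rel k v v := by
  rintro ((i|j)|(⟨c,p⟩|⟨q,x⟩)) h <;> simp only [rel] at h
  rcases h.2 with ⟨h1, h2⟩ | ⟨h1, h2⟩ <;> exact par_ne_self _ h1 h2

def GG : SimpleGraph (V k) := ⟨rel k, ⟨fun _ _ h => rel_symm k h⟩, ⟨fun v h => rel_irrefl k v h⟩⟩

instance : DecidableRel (GG k).Adj := by
  intro u v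
  rcases u with ((i|j)|(⟨c,p⟩|⟨q,x⟩)) <;> rcases v with ((i'|j')|(⟨c',p'⟩|⟨q',x'⟩)) <;>
    · simp only [GG, rel]; infer_instance

lemma adjGG {u v : V k} : (GG k).Adj u v ↔ rel k u v := Iff.rfl

end Graph

section Orient

variable (k : ℕ)

/-- model orientation. -/
def odir : V k → V k → Bool
  | .inl (.inl i), .inl (.inr j) => decide ((j - i).val < k)
  | .inl (.inr j), .inl (.inl i) => !(decide ((j - i).val < k))
  | .inr (.inl (c,p)), .inr (.inl (c',q)) =>
      decide (c = c') &&
        ((decide (q ≠ 0 ∧ par q = p) && !(give q)) || (decide (p ≠ 0 ∧ par p = q) && give p))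
  | .inr (.inl (_,p)), .inr (.inr (q,_)) => decide (p = q)
  | _, _ => false

lemma odir_adj_iff : ∀ u v, (GG k).Adj u v ↔ (odir k u v = true ∨ odir k v u = true) := by
  rintro ((i|j)|(⟨c,p⟩|⟨q,x⟩)) ((i'|j')|(⟨c',p'⟩|⟨q',x'⟩)) <;>
    simp only [GG, rel, odir, Bool.or_eq_true, Bool.and_eq_true, Bool.not_eq_true',
      decide_eq_true_eq, decide_eq_false_iff_not, SimpleGraph.Adj] <;>
    try tauto
  · -- base base
    cases hq : give p' <;> cases hp : give p <;> simp [hq, hp] <;> tauto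

lemma odir_not_both : ∀ u v, ¬(odir k u v = true ∧ odir k v u = true) := by
  rintro ((i|j)|(⟨c,p⟩|⟨q,x⟩)) ((i'|j')|(⟨c',p'⟩|⟨q',x'⟩)) <;>
    simp only [odir, Bool.or_eq_true, Bool.and_eq_true, Bool.not_eq_true',
      decide_eq_true_eq, decide_eq_false_iff_not] <;>
    try tauto
  · -- base base
    rintro ⟨⟨-, h1⟩, ⟨-, h2⟩⟩
    rcases h1 with ⟨⟨a1, a2⟩, g1⟩ | ⟨⟨b1, b2⟩, g2⟩ <;> rcases h2 with ⟨⟨c1, c2⟩, g3⟩ | ⟨⟨d1, d2⟩, g4⟩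
    · exact no_two_cycle _ _ c1 c2 a1 a2
    · rw [g1] at g4; exact Bool.false_ne_true g4
    · rw [g3] at g2; exact Bool.false_ne_true g2
    · exact no_two_cycle _ _ b1 b2 d1 d2

def oUp : GOrientation (GG k) := ⟨odir k, odir_adj_iff k, odir_not_both k⟩

end Orient

section Counts

variable {k : ℕ}

/-- base vertex -/
abbrev bb (c : Fin (ss k)) (p : Fin 48) : V k := .inr (.inl (c,p))
/-- dummy vertex -/
abbrev dd (p : Fin 48) (x : Fin (k-1)) : V k := .inr (.inr (p,x))
/-- K-left vertex -/
abbrev lf (i : Fin (mm k)) : V k := .inl (.inl i)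
/-- K-right vertex -/
abbrev rt (j : Fin (mm k)) : V k := .inl (.inr j)

lemma dir_adj (o : GOrientation (GG k)) {u v} (h : o.dir u v = true) : (GG k).Adj u v :=
  (o.adj_iff u v).mpr (Or.inl h)

lemma dir_rev (o : GOrientation (GG k)) {u v} (h : (GG k).Adj u v) (hn : ¬ o.dir u v = true) :
    o.dir v u = true := ((o.adj_iff u v).mp h).resolve_left hn

lemma outDeg_split (o : GOrientation (GG k)) (u : V k) :
    o.outDeg u = ((univ.filter fun i : Fin (mm k) => o.dir u (lf i) = true).card
      + (univ.filter fun j : Fin (mm k) => o.dir u (rt j) = true).card)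
      + ((univ.filter fun b : Fin (ss k) × Fin 48 => o.dir u (.inr (.inl b)) = true).card
      + (univ.filter fun d : Fin 48 × Fin (k-1) => o.dir u (.inr (.inr d)) = true).card) := by
  unfold GOrientation.outDeg
  rw [card_filter_sum, card_filter_sum, card_filter_sum]

lemma outDeg_base (o : GOrientation (GG k)) (c : Fin (ss k)) (p : Fin 48) :
    o.outDeg (bb c p) = (univ.filter fun q : Fin 48 => o.dir (bb c p) (bb c q) = true).card
      + (univ.filter fun x : Fin (k-1) => o.dir (bb c p) (dd p x) = true).card := by
  rw [outDeg_split]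
  rw [card_filter_zero (fun i : Fin (mm k) => o.dir (bb c p) (lf i) = true)
    (fun i h => by have := dir_adj o h; simp [GG, rel] at this)]
  rw [card_filter_zero (fun j : Fin (mm k) => o.dir (bb c p) (rt j) = true)
    (fun j h => by have := dir_adj o h; simp [GG, rel] at this)]
  rw [card_filter_fst c (fun b : Fin (ss k) × Fin 48 => o.dir (bb c p) (.inr (.inl b)) = true)
    (fun b h => by have := dir_adj o h; obtain ⟨b1, b2⟩ := b;
                   simp only [GG, rel, SimpleGraph.Adj] at this; exact this.1.symm)]
  rw [card_filter_fst p (fun d : Fin 48 × Fin (k-1) => o.dir (bb c p) (.inr (.inr d)) = true)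
    (fun d h => by have := dir_adj o h; obtain ⟨d1, d2⟩ := d;
                   simp only [GG, rel, SimpleGraph.Adj] at this; exact this.symm)]
  simp

lemma outDeg_dummy (o : GOrientation (GG k)) (p : Fin 48) (x : Fin (k-1)) :
    o.outDeg (dd p x)
      = (univ.filter fun c : Fin (ss k) => o.dir (dd p x) (bb c p) = true).card := by
  rw [outDeg_split]
  rw [card_filter_zero (fun i : Fin (mm k) => o.dir (dd p x) (lf i) = true)
    (fun i h => by have := dir_adj o h; simp [GG, rel] at this)]
  rw [card_filter_zero (fun j : Fin (mm k) => o.dir (dd p x) (rt j) = true)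
    (fun j h => by have := dir_adj o h; simp [GG, rel] at this)]
  rw [card_filter_zero (fun d : Fin 48 × Fin (k-1) => o.dir (dd p x) (.inr (.inr d)) = true)
    (fun d h => by have := dir_adj o h; obtain ⟨d1, d2⟩ := d; simp [GG, rel] at this)]
  rw [card_filter_snd p (fun b : Fin (ss k) × Fin 48 => o.dir (dd p x) (.inr (.inl b)) = true)
    (fun b h => by have := dir_adj o h; obtain ⟨b1, b2⟩ := b;
                   simp only [GG, rel, SimpleGraph.Adj] at this; exact this)]
  simp

end Counts

section UpCounts

variable {k : ℕ}

lemma card_lt_aux (hk : 1 ≤ k) :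
    (univ.filter fun d : Fin (mm k) => d.val < k).card = k := by
  have hkm : k ≤ mm k := by unfold mm; omega
  conv_rhs => rw [← Fintype.card_fin k, ← card_univ]
  apply Finset.card_bij
    (fun (d : Fin (mm k)) (hd : d ∈ univ.filter fun d : Fin (mm k) => d.val < k) =>
      (⟨d.val, by simpa using hd⟩ : Fin k))
  · intros; exact mem_univ _
  · intro a ha b hb hab
    have h2 : (⟨a.val, _⟩ : Fin k).val = (⟨b.val, _⟩ : Fin k).val := congrArg Fin.val hab
    exact Fin.ext h2
  · intro t _
    exact ⟨⟨t.val, lt_of_lt_of_le t.isLt hkm⟩, by simp [t.isLt], rfl⟩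

lemma card_cond (hk : 1 ≤ k) (i : Fin (mm k)) :
    (univ.filter fun j : Fin (mm k) => (j - i).val < k).card = k := by
  haveI : NeZero (mm k) := ⟨by unfold mm; omega⟩
  have h1 : (univ.filter fun j : Fin (mm k) => (j - i).val < k).card
      = (univ.filter fun d : Fin (mm k) => d.val < k).card := by
    apply Finset.card_nbij' (fun j => j - i) (fun d => d + i)
    · intro a ha; simpa using (by simpa using ha)
    · intro d hd; simp only [mem_coe, mem_filter, mem_univ, true_and] at *; rwa [add_sub_cancel_right]
    · intro a _; exact sub_add_cancel a i
    · intro d _; exact add_sub_cancel_right d i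
  rw [h1, card_lt_aux hk]

lemma card_cond' (hk : 1 ≤ k) (j : Fin (mm k)) :
    (univ.filter fun i : Fin (mm k) => (j - i).val < k).card = k := by
  haveI : NeZero (mm k) := ⟨by unfold mm; omega⟩
  have h1 : (univ.filter fun i : Fin (mm k) => (j - i).val < k).card
      = (univ.filter fun d : Fin (mm k) => d.val < k).card := by
    apply Finset.card_nbij' (fun i => j - i) (fun d => j - d)
    · intro a ha; simpa using (by simpa using ha)
    · intro d hd; simp only [mem_coe, mem_filter, mem_univ, true_and] at *; rwa [sub_sub_cancel]
    · intro a _; exact sub_sub_cancel j a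
    · intro d _; exact sub_sub_cancel j d
  rw [h1, card_lt_aux hk]

lemma card_ncond (hk : 1 ≤ k) (j : Fin (mm k)) :
    (univ.filter fun i : Fin (mm k) => ¬((j - i).val < k)).card = k - 1 := by
  classical
  have h := Finset.card_filter_add_card_filter_not
    (s := (univ : Finset (Fin (mm k)))) (p := fun i => (j - i).val < k)
  rw [card_cond' hk j] at h
  have hu : (univ : Finset (Fin (mm k))).card = mm k := by simp
  have : mm k = 2*k - 1 := rfl
  omega

end UpCounts

section UpDeg

variable {k : ℕ}

lemma vT_count : ∀ p : Fin 48,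
    (univ.filter fun q : Fin 48 =>
      ((q ≠ 0 ∧ par q = p) ∧ give q = false) ∨ ((p ≠ 0 ∧ par p = q) ∧ give p = true)).card
      = vT p := by decide

lemma oUp_base (c : Fin (ss k)) (p : Fin 48) :
    (oUp k).outDeg (bb c p) = vT p + (k - 1) := by
  rw [outDeg_base]
  congr 1
  · rw [← vT_count p]
    apply Finset.card_bij (fun q _ => q)  -- same elements
    · intro q hq
      simp only [mem_filter, mem_univ, true_and] at hq ⊢
      simp only [oUp, odir, Bool.and_eq_true, Bool.or_eq_true, Bool.not_eq_true',
        decide_eq_true_eq] at hq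
      tauto
    · intro a b _ _ h; exact h
    · intro q hq
      refine ⟨q, ?_, rfl⟩
      simp only [mem_filter, mem_univ, true_and] at hq ⊢
      simp only [oUp, odir, Bool.and_eq_true, Bool.or_eq_true, Bool.not_eq_true',
        decide_eq_true_eq]
      tauto
  · have : (univ.filter fun x : Fin (k-1) => (oUp k).dir (bb c p) (dd p x) = true) = univ := by
      ext x; simp [oUp, odir]
    rw [this, card_univ, Fintype.card_fin]

lemma oUp_dummy (p : Fin 48) (x : Fin (k-1)) : (oUp k).outDeg (dd p x) = 0 := by
  rw [outDeg_dummy]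
  apply card_filter_zero
  intro c h
  simp [oUp, odir] at h

lemma oUp_left (hk : 1 ≤ k) (i : Fin (mm k)) : (oUp k).outDeg (lf i) = k := by
  rw [outDeg_split]
  rw [card_filter_zero (fun i' : Fin (mm k) => (oUp k).dir (lf i) (lf i') = true)
    (fun i' h => by simp [oUp, odir] at h)]
  rw [card_filter_zero (fun b : Fin (ss k) × Fin 48 => (oUp k).dir (lf i) (.inr (.inl b)) = true)
    (fun b h => by obtain ⟨b1,b2⟩ := b; simp [oUp, odir] at h)]
  rw [card_filter_zero (fun d : Fin 48 × Fin (k-1) => (oUp k).dir (lf i) (.inr (.inr d)) = true)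
    (fun d h => by obtain ⟨d1,d2⟩ := d; simp [oUp, odir] at h)]
  have : (univ.filter fun j : Fin (mm k) => (oUp k).dir (lf i) (rt j) = true)
      = (univ.filter fun j : Fin (mm k) => (j - i).val < k) := by
    ext j; simp [oUp, odir]
  rw [this, card_cond hk i]
  simp

lemma oUp_right (hk : 1 ≤ k) (j : Fin (mm k)) : (oUp k).outDeg (rt j) = k - 1 := by
  rw [outDeg_split]
  rw [card_filter_zero (fun j' : Fin (mm k) => (oUp k).dir (rt j) (rt j') = true)
    (fun j' h => by simp [oUp, odir] at h)]
  rw [card_filter_zero (fun b : Fin (ss k) × Fin 48 => (oUp k).dir (rt j) (.inr (.inl b)) = true)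
    (fun b h => by obtain ⟨b1,b2⟩ := b; simp [oUp, odir] at h)]
  rw [card_filter_zero (fun d : Fin 48 × Fin (k-1) => (oUp k).dir (rt j) (.inr (.inr d)) = true)
    (fun d h => by obtain ⟨d1,d2⟩ := d; simp [oUp, odir] at h)]
  have : (univ.filter fun i : Fin (mm k) => (oUp k).dir (rt j) (lf i) = true)
      = (univ.filter fun i : Fin (mm k) => ¬((j - i).val < k)) := by
    ext i; simp [oUp, odir]
  rw [this, card_ncond hk j]
  simp

lemma oUp_proper (hk : 1 ≤ k) : (oUp k).IsProper := by
  rintro ((i|j)|(⟨c,p⟩|⟨q,x⟩)) ((i'|j')|(⟨c',p'⟩|⟨q',x'⟩)) hadj <;>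
    simp only [GG, rel, SimpleGraph.Adj] at hadj
  · -- left right
    rw [oUp_left hk, oUp_right hk]; omega
  · rw [oUp_left hk, oUp_right hk]; omega
  · -- base base
    obtain ⟨rfl, h⟩ := hadj
    rw [oUp_base, oUp_base]
    rcases h with ⟨h1, h2⟩ | ⟨h1, h2⟩
    · have := vT_par _ h1; rw [h2] at this; omega
    · have := vT_par _ h1; rw [h2] at this; omega
  · -- base dummy
    rw [oUp_base, oUp_dummy]
    have hx : (0:ℕ) < k - 1 := x'.pos
    omega
  · -- dummy base
    rw [oUp_base, oUp_dummy]
    have hx : (0:ℕ) < k - 1 := x.pos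
    omega

lemma oUp_cap (hk : 1 ≤ k) : ∀ u, (oUp k).outDeg u ≤ k + 3 := by
  rintro ((i|j)|(⟨c,p⟩|⟨q,x⟩))
  · rw [oUp_left hk]; omega
  · rw [oUp_right hk]; omega
  · rw [oUp_base]; have := vT_le p; omega
  · rw [oUp_dummy]; omega

end UpDeg

section Lower

variable {k : ℕ}

/-- fullness of copy `c` at position `p`: all core edges point out of the base vertex. -/
def isfull (o : GOrientation (GG k)) (c : Fin (ss k)) (p : Fin 48) : Prop :=
  ∀ x : Fin (k-1), o.dir (bb c p) (dd p x) = true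

instance (o : GOrientation (GG k)) (c : Fin (ss k)) (p : Fin 48) :
    Decidable (isfull o c p) := by unfold isfull; infer_instance

lemma nonfull_bound (o : GOrientation (GG k)) (hcap : ∀ u, o.outDeg u ≤ k + 2) (p : Fin 48) :
    (univ.filter fun c : Fin (ss k) => ¬ isfull o c p).card ≤ (k-1) * (k+2) := by
  classical
  have hsub : (univ.filter fun c : Fin (ss k) => ¬ isfull o c p) ⊆
      univ.biUnion (fun x : Fin (k-1) =>
        univ.filter fun c : Fin (ss k) => o.dir (dd p x) (bb c p) = true) := by
    intro c hc
    simp only [mem_filter, mem_univ, true_and] at hc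
    unfold isfull at hc; push_neg at hc
    obtain ⟨x, hx⟩ := hc
    have hadj : (GG k).Adj (bb c p) (dd p x) := by
      rw [adjGG]; simp [rel]
    have hd := dir_rev o hadj hx
    exact mem_biUnion.mpr ⟨x, mem_univ _, by simp [hd]⟩
  calc (univ.filter fun c : Fin (ss k) => ¬ isfull o c p).card
      ≤ (univ.biUnion (fun x : Fin (k-1) =>
          univ.filter fun c : Fin (ss k) => o.dir (dd p x) (bb c p) = true)).card :=
        Finset.card_le_card hsub
    _ ≤ ∑ x : Fin (k-1),
          (univ.filter fun c : Fin (ss k) => o.dir (dd p x) (bb c p) = true).card :=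
        Finset.card_biUnion_le
    _ ≤ ∑ _x : Fin (k-1), (k+2) := by
        apply Finset.sum_le_sum
        intro x _
        rw [← outDeg_dummy o p x]
        exact hcap _
    _ = (k-1) * (k+2) := by simp [Finset.sum_const, mul_comm]

lemma exists_good (o : GOrientation (GG k)) (hcap : ∀ u, o.outDeg u ≤ k + 2) :
    ∃ c : Fin (ss k), ∀ p : Fin 48, isfull o c p := by
  classical
  by_contra h
  push_neg at h
  have hsub : (univ : Finset (Fin (ss k))) ⊆
      univ.biUnion (fun p : Fin 48 =>
        univ.filter fun c : Fin (ss k) => ¬ isfull o c p) := by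
    intro c _
    obtain ⟨p, hp⟩ := h c
    exact mem_biUnion.mpr ⟨p, mem_univ _, by simp [hp]⟩
  have h1 : (univ : Finset (Fin (ss k))).card ≤ 48 * ((k-1) * (k+2)) := by
    calc (univ : Finset (Fin (ss k))).card
        ≤ (univ.biUnion (fun p : Fin 48 =>
            univ.filter fun c : Fin (ss k) => ¬ isfull o c p)).card :=
          Finset.card_le_card hsub
      _ ≤ ∑ p : Fin 48, (univ.filter fun c : Fin (ss k) => ¬ isfull o c p).card :=
          Finset.card_biUnion_le
      _ ≤ ∑ _p : Fin 48, (k-1) * (k+2) := by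
          apply Finset.sum_le_sum
          intro p _
          exact nonfull_bound o hcap p
      _ = 48 * ((k-1) * (k+2)) := by simp [Finset.sum_const]
  have h2 : (univ : Finset (Fin (ss k))).card = ss k := by simp
  have h3 : ss k = 48*(k-1)*(k+2) + 1 := rfl
  have h4 : 48*(k-1)*(k+2) = 48 * ((k-1)*(k+2)) := by ring
  omega

variable (o : GOrientation (GG k)) (c : Fin (ss k))

/-- children of `p` that receive the edge from `p` (in the fixed copy). -/
def Rs (p : Fin 48) : Finset (Fin 48) :=
  univ.filter fun q => (q ≠ 0 ∧ par q = p) ∧ o.dir (bb c p) (bb c q) = true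

/-- `p` gives to its parent. -/
def gv (p : Fin 48) : Prop := o.dir (bb c p) (bb c (par p)) = true

instance (p : Fin 48) : Decidable (gv o c p) := by unfold gv; infer_instance

lemma no_parent_child : ∀ p : Fin 48, ¬(par p ≠ 0 ∧ par (par p) = p) := by decide

lemma adj_child {p q : Fin 48} (h1 : q ≠ 0) (h2 : par q = p) :
    (GG k).Adj (bb c p) (bb c q) := by
  rw [adjGG]
  simp only [rel]
  exact ⟨trivial, Or.inl ⟨h1, h2⟩⟩

lemma child_gives {p q : Fin 48} (h1 : q ≠ 0) (h2 : par q = p)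
    (hnot : q ∉ Rs o c p) : gv o c q := by
  simp only [Rs, mem_filter, mem_univ, true_and] at hnot
  push_neg at hnot
  have hnd := hnot ⟨h1, h2⟩
  have := dir_rev o (adj_child c h1 h2) hnd
  unfold gv
  rwa [h2]

lemma val_formula (hk : 1 ≤ k) (hfull : ∀ p, isfull o c p) (p : Fin 48) :
    o.outDeg (bb c p) = (k - 1) + ((Rs o c p).card + (if gv o c p then 1 else 0)) := by
  classical
  rw [outDeg_base]
  have hdum : (univ.filter fun x : Fin (k-1) => o.dir (bb c p) (dd p x) = true) = univ := by
    ext x; simpa using hfull p x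
  have hbase : (univ.filter fun q : Fin 48 => o.dir (bb c p) (bb c q) = true)
      = (Rs o c p) ∪ (if gv o c p then {par p} else ∅) := by
    ext q
    simp only [Rs, mem_filter, mem_univ, true_and, Finset.mem_union]
    constructor
    · intro hd
      have hadj := dir_adj o hd
      simp only [GG, rel, SimpleGraph.Adj] at hadj
      rcases hadj.2 with ⟨h1, h2⟩ | ⟨h1, h2⟩
      · exact Or.inl ⟨⟨h1, h2⟩, hd⟩
      · right
        have hq : q = par p := h2.symm
        subst hq
        have : gv o c p := hd
        simp [this]
    · intro hq
      rcases hq with ⟨-, hd⟩ | hq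
      · exact hd
      · by_cases hg : gv o c p
        · simp only [hg, if_true, Finset.mem_singleton] at hq
          subst hq; exact hg
        · simp [hg] at hq
  rw [hdum, hbase, card_univ, Fintype.card_fin]
  have hdisj : Disjoint (Rs o c p) (if gv o c p then ({par p} : Finset (Fin 48)) else ∅) := by
    by_cases hg : gv o c p
    · simp only [hg, if_true]
      rw [Finset.disjoint_singleton_right]
      simp only [Rs, mem_filter, mem_univ, true_and]
      rintro ⟨⟨h1, h2⟩, -⟩
      exact no_parent_child p ⟨h1, h2⟩
    · simp [hg]
  rw [Finset.card_union_of_disjoint hdisj]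
  have : (if gv o c p then ({par p} : Finset (Fin 48)) else ∅).card
      = (if gv o c p then 1 else 0) := by
    by_cases hg : gv o c p <;> simp [hg]
  rw [this]
  omega

end Lower

section Chain

variable {k : ℕ}

def Yset : Finset (Fin 48) :=
  {1,8,9,10,11,12,19,20,21,22,23,24,25,31,32,33,34,35,42,43,44,45,46,47}
def Pset : Finset (Fin 48) := {2,3,13,14,15,16,17,18,26,27,36,37,38,39,40,41}
def Sset : Finset (Fin 48) := {4,5,6,28,29,30}

def ych : Fin 48 → Fin 48 :=
  ![1, 0, 8, 9, 10, 11, 12, 25,  0,0, 0,0,0,  19,20,21,22,23,24,  0,0,0,0,0,0,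
    0, 31, 32, 33, 34, 35,  0,0,  0,0,0,  42,43,44,45,46,47,  0,0,0,0,0,0]
def pch1 : Fin 48 → Fin 48 :=
  ![2,0,0,0,13,15,17,26,0,0,0,0,0,0,0,0,0,0,0,0,0,0,0,0,0,0,0,0,36,38,40,0,0,0,0,0,0,0,0,0,0,0,0,0,0,0,0,0]
def pch2 : Fin 48 → Fin 48 :=
  ![3,0,0,0,14,16,18,27,0,0,0,0,0,0,0,0,0,0,0,0,0,0,0,0,0,0,0,0,37,39,41,0,0,0,0,0,0,0,0,0,0,0,0,0,0,0,0,0]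

lemma hYc : ∀ q ∈ Yset, ∀ r : Fin 48, ¬(r ≠ 0 ∧ par r = q) := by decide
lemma hPc : ∀ q ∈ Pset, (ych q ≠ 0 ∧ par (ych q) = q ∧ ych q ∈ Yset)
    ∧ (∀ r : Fin 48, r ≠ 0 → par r = q → r = ych q) := by decide
lemma hSc : ∀ q ∈ Sset, (ych q ≠ 0 ∧ par (ych q) = q ∧ ych q ∈ Yset)
    ∧ (pch1 q ≠ 0 ∧ par (pch1 q) = q ∧ pch1 q ∈ Pset)
    ∧ (pch2 q ≠ 0 ∧ par (pch2 q) = q ∧ pch2 q ∈ Pset)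
    ∧ pch1 q ≠ pch2 q
    ∧ (∀ r : Fin 48, r ≠ 0 → par r = q → (r = ych q ∨ r = pch1 q ∨ r = pch2 q)) := by decide

lemma Lgy (hk : 1 ≤ k) (o : GOrientation (GG k)) (c : Fin (ss k))
    (hfull : ∀ p, isfull o c p) :
    ∀ q ∈ Yset, gv o c q → o.outDeg (bb c q) = k := by
  intro q hq hg
  have hcard : (Rs o c q) = ∅ := by
    ext r
    simp only [Rs, mem_filter, mem_univ, true_and, Finset.notMem_empty, iff_false, not_and]
    intro hch _
    exact absurd hch (hYc q hq r)
  rw [val_formula o c hk hfull q, hcard, if_pos hg]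
  simp; omega

lemma Lgp (hk : 1 ≤ k) (o : GOrientation (GG k)) (hp : o.IsProper)
    (c : Fin (ss k)) (hfull : ∀ p, isfull o c p) :
    ∀ q ∈ Pset, gv o c q → o.outDeg (bb c q) = k + 1 := by
  intro q hq hg
  obtain ⟨⟨hy0, hyp, hyY⟩, huniq⟩ := hPc q hq
  have hsub : Rs o c q ⊆ {ych q} := by
    intro r hr
    simp only [Rs, mem_filter, mem_univ, true_and] at hr
    simp only [Finset.mem_singleton]
    exact huniq r hr.1.1 hr.1.2
  have hcard : (Rs o c q).card ≤ 1 :=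
    le_trans (Finset.card_le_card hsub) (by simp)
  have hvf := val_formula o c hk hfull q
  rcases Nat.le_one_iff_eq_zero_or_eq_one.mp hcard with h0 | h1
  · exfalso
    have hnot : ych q ∉ Rs o c q := by
      intro hmem
      have := Finset.card_pos.mpr ⟨_, hmem⟩; omega
    have hgy := child_gives o c hy0 hyp hnot
    have hvy := Lgy hk o c hfull (ych q) hyY hgy
    have hval : o.outDeg (bb c q) = k := by rw [hvf, h0, if_pos hg]; omega
    have hne := hp _ _ (adj_child c hy0 hyp)
    rw [hval, hvy] at hne
    exact hne rfl
  · rw [hvf, h1, if_pos hg]; omega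

lemma Lgs (hk : 1 ≤ k) (o : GOrientation (GG k)) (hp : o.IsProper)
    (hcap : ∀ u, o.outDeg u ≤ k + 2) (c : Fin (ss k)) (hfull : ∀ p, isfull o c p) :
    ∀ q ∈ Sset, gv o c q → o.outDeg (bb c q) = k + 2 := by
  intro q hq hg
  obtain ⟨⟨hy0, hyp, hyY⟩, ⟨ha0, hap, haP⟩, ⟨hb0, hbp, hbP⟩, hab, huniq⟩ := hSc q hq
  have hvf := val_formula o c hk hfull q
  have hcap' := hcap (bb c q)
  rw [hvf, if_pos hg] at hcap'
  have hcard : (Rs o c q).card ≤ 2 := by omega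
  have h2 : (Rs o c q).card = 2 := by
    by_contra hne2
    have hle1 : (Rs o c q).card ≤ 1 := by omega
    have hpi : pch1 q ∉ Rs o c q ∨ pch2 q ∉ Rs o c q := by
      by_contra hbo; push_neg at hbo
      have hsub2 : ({pch1 q, pch2 q} : Finset (Fin 48)) ⊆ Rs o c q := by
        intro r hr
        simp only [Finset.mem_insert, Finset.mem_singleton] at hr
        rcases hr with rfl | rfl
        exacts [hbo.1, hbo.2]
      have hc2 : ({pch1 q, pch2 q} : Finset (Fin 48)).card = 2 := by
        rw [Finset.card_insert_of_notMem (by simpa using hab), Finset.card_singleton]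
      have := Finset.card_le_card hsub2
      omega
    rcases Nat.le_one_iff_eq_zero_or_eq_one.mp hle1 with h0 | h1
    · have hnot : ych q ∉ Rs o c q := by
        intro hmem
        have := Finset.card_pos.mpr ⟨_, hmem⟩; omega
      have hgy := child_gives o c hy0 hyp hnot
      have hvy := Lgy hk o c hfull (ych q) hyY hgy
      have hval : o.outDeg (bb c q) = k := by rw [hvf, h0, if_pos hg]; omega
      have hne := hp _ _ (adj_child c hy0 hyp)
      rw [hval, hvy] at hne
      exact hne rfl
    · have hval : o.outDeg (bb c q) = k + 1 := by rw [hvf, h1, if_pos hg]; omega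
      rcases hpi with hnpi | hnpi
      · have hgp := child_gives o c ha0 hap hnpi
        have hvp := Lgp hk o hp c hfull (pch1 q) haP hgp
        have hne := hp _ _ (adj_child c ha0 hap)
        rw [hval, hvp] at hne
        exact hne rfl
      · have hgp := child_gives o c hb0 hbp hnpi
        have hvp := Lgp hk o hp c hfull (pch2 q) hbP hgp
        have hne := hp _ _ (adj_child c hb0 hbp)
        rw [hval, hvp] at hne
        exact hne rfl
  rw [hvf, h2, if_pos hg]
  omega

lemma Lrho (hk : 1 ≤ k) (o : GOrientation (GG k)) (hp : o.IsProper)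
    (hcap : ∀ u, o.outDeg u ≤ k + 2) (c : Fin (ss k)) (hfull : ∀ p, isfull o c p) :
    ¬ gv o c (7 : Fin 48) := by
  intro hg
  have h25 : (25:Fin 48) ≠ 0 ∧ par 25 = 7 ∧ (25:Fin 48) ∈ Yset := by decide
  have h26 : (26:Fin 48) ≠ 0 ∧ par 26 = 7 ∧ (26:Fin 48) ∈ Pset := by decide
  have h27 : (27:Fin 48) ≠ 0 ∧ par 27 = 7 ∧ (27:Fin 48) ∈ Pset := by decide
  have h28 : (28:Fin 48) ≠ 0 ∧ par 28 = 7 ∧ (28:Fin 48) ∈ Sset := by decide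
  have h29 : (29:Fin 48) ≠ 0 ∧ par 29 = 7 ∧ (29:Fin 48) ∈ Sset := by decide
  have h30 : (30:Fin 48) ≠ 0 ∧ par 30 = 7 ∧ (30:Fin 48) ∈ Sset := by decide
  have hvf := val_formula o c hk hfull 7
  have hcap' := hcap (bb c 7)
  rw [hvf, if_pos hg] at hcap'
  have hcard : (Rs o c 7).card ≤ 2 := by omega
  have hval : o.outDeg (bb c 7) = k + (Rs o c 7).card := by
    rw [hvf, if_pos hg]; omega
  rcases Nat.lt_or_ge (Rs o c 7).card 1 with h0 | h1
  · -- card 0 : y child 25 gives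
    have hnot : (25:Fin 48) ∉ Rs o c 7 := by
      intro hmem
      have := Finset.card_pos.mpr ⟨_, hmem⟩; omega
    have hgy := child_gives o c h25.1 h25.2.1 hnot
    have hvy := Lgy hk o c hfull 25 h25.2.2 hgy
    have hne := hp _ _ (adj_child c h25.1 h25.2.1)
    rw [hval, hvy] at hne
    omega
  rcases Nat.lt_or_ge (Rs o c 7).card 2 with hlt2 | h2
  · -- card 1 : some π child gives
    have hpi : (26:Fin 48) ∉ Rs o c 7 ∨ (27:Fin 48) ∉ Rs o c 7 := by
      by_contra hbo; push_neg at hbo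
      have hsub2 : ({26, 27} : Finset (Fin 48)) ⊆ Rs o c 7 := by
        intro r hr
        simp only [Finset.mem_insert, Finset.mem_singleton] at hr
        rcases hr with rfl | rfl
        exacts [hbo.1, hbo.2]
      have := Finset.card_le_card hsub2
      have hc2 : ({26, 27} : Finset (Fin 48)).card = 2 := by decide
      omega
    rcases hpi with hnpi | hnpi
    · have hgp := child_gives o c h26.1 h26.2.1 hnpi
      have hvp := Lgp hk o hp c hfull 26 h26.2.2 hgp
      have hne := hp _ _ (adj_child c h26.1 h26.2.1)
      rw [hval, hvp] at hne
      omega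
    · have hgp := child_gives o c h27.1 h27.2.1 hnpi
      have hvp := Lgp hk o hp c hfull 27 h27.2.2 hgp
      have hne := hp _ _ (adj_child c h27.1 h27.2.1)
      rw [hval, hvp] at hne
      omega
  · -- card 2 : some σ child gives
    have hsig : (28:Fin 48) ∉ Rs o c 7 ∨ (29:Fin 48) ∉ Rs o c 7 ∨ (30:Fin 48) ∉ Rs o c 7 := by
      by_contra hbo; push_neg at hbo
      have hsub3 : ({28, 29, 30} : Finset (Fin 48)) ⊆ Rs o c 7 := by
        intro r hr
        simp only [Finset.mem_insert, Finset.mem_singleton] at hr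
        rcases hr with rfl | rfl | rfl
        exacts [hbo.1, hbo.2.1, hbo.2.2]
      have := Finset.card_le_card hsub3
      have hc3 : ({28, 29, 30} : Finset (Fin 48)).card = 3 := by decide
      omega
    have hcd : (Rs o c 7).card = 2 := by omega
    have key : ∀ r : Fin 48, r ≠ 0 → par r = 7 → r ∈ Sset → r ∉ Rs o c 7 →
        False := by
      intro r hr0 hrp hrS hnr
      have hgs := child_gives o c hr0 hrp hnr
      have hvs := Lgs hk o hp hcap c hfull r hrS hgs
      have hne := hp _ _ (adj_child c hr0 hrp)
      rw [hval, hvs, hcd] at hne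
      exact hne rfl
    rcases hsig with h | h | h
    · exact key 28 h28.1 h28.2.1 h28.2.2 h
    · exact key 29 h29.1 h29.2.1 h29.2.2 h
    · exact key 30 h30.1 h30.2.1 h30.2.2 h

lemma root_false (hk : 1 ≤ k) (o : GOrientation (GG k)) (hp : o.IsProper)
    (hcap : ∀ u, o.outDeg u ≤ k + 2) (c : Fin (ss k)) (hfull : ∀ p, isfull o c p) :
    False := by
  have hg7 := Lrho hk o hp hcap c hfull
  have h7 : (7:Fin 48) ≠ 0 ∧ par 7 = 0 := by decide
  have h1y : (1:Fin 48) ≠ 0 ∧ par 1 = 0 ∧ (1:Fin 48) ∈ Yset := by decide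
  have h2p : (2:Fin 48) ≠ 0 ∧ par 2 = 0 ∧ (2:Fin 48) ∈ Pset := by decide
  have h3p : (3:Fin 48) ≠ 0 ∧ par 3 = 0 ∧ (3:Fin 48) ∈ Pset := by decide
  have h4s : (4:Fin 48) ≠ 0 ∧ par 4 = 0 ∧ (4:Fin 48) ∈ Sset := by decide
  have h5s : (5:Fin 48) ≠ 0 ∧ par 5 = 0 ∧ (5:Fin 48) ∈ Sset := by decide
  have h6s : (6:Fin 48) ≠ 0 ∧ par 6 = 0 ∧ (6:Fin 48) ∈ Sset := by decide
  -- 7 ∈ Rs o c 0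
  have hmem7 : (7:Fin 48) ∈ Rs o c 0 := by
    have hadj := adj_child (k := k) c (p := (0:Fin 48)) h7.1 h7.2
    have hnd : ¬ o.dir (bb c 7) (bb c 0) = true := by
      intro hd
      apply hg7
      unfold gv
      rwa [h7.2]
    have hdir := dir_rev o hadj.symm hnd
    simp only [Rs, mem_filter, mem_univ, true_and]
    exact ⟨⟨h7.1, h7.2⟩, hdir⟩
  have hg0 : ¬ gv o c 0 := by
    intro h
    have hadj0 := dir_adj o h
    have hpar : par (0:Fin 48) = 0 := by decide
    rw [hpar] at hadj0
    exact (GG k).irrefl hadj0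
  have hvf := val_formula o c hk hfull 0
  have hcap' := hcap (bb c 0)
  rw [hvf, if_neg hg0] at hcap'
  have hval : o.outDeg (bb c 0) = (k - 1) + (Rs o c 0).card := by
    rw [hvf, if_neg hg0]; omega
  have hge1 : 0 < (Rs o c 0).card := Finset.card_pos.mpr ⟨7, hmem7⟩
  have hle3 : (Rs o c 0).card ≤ 3 := by omega
  rcases Nat.lt_or_ge (Rs o c 0).card 2 with hc1 | hge2
  · have hnot : (1:Fin 48) ∉ Rs o c 0 := by
      intro hmem
      have hsub : ({1, 7} : Finset (Fin 48)) ⊆ Rs o c 0 := by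
        intro r hr; simp only [Finset.mem_insert, Finset.mem_singleton] at hr
        rcases hr with rfl | rfl
        exacts [hmem, hmem7]
      have hcc := Finset.card_le_card hsub
      have hc2 : ({1, 7} : Finset (Fin 48)).card = 2 := by decide
      omega
    have hgy := child_gives o c h1y.1 h1y.2.1 hnot
    have hvy := Lgy hk o c hfull 1 h1y.2.2 hgy
    have hne := hp _ _ (adj_child c h1y.1 h1y.2.1)
    rw [hval, hvy] at hne
    omega
  rcases Nat.lt_or_ge (Rs o c 0).card 3 with hc2 | hge3
  · have hpi : (2:Fin 48) ∉ Rs o c 0 ∨ (3:Fin 48) ∉ Rs o c 0 := by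
      by_contra hbo; push_neg at hbo
      have hsub : ({2, 3, 7} : Finset (Fin 48)) ⊆ Rs o c 0 := by
        intro r hr; simp only [Finset.mem_insert, Finset.mem_singleton] at hr
        rcases hr with rfl | rfl | rfl
        exacts [hbo.1, hbo.2, hmem7]
      have hcc := Finset.card_le_card hsub
      have hc3 : ({2, 3, 7} : Finset (Fin 48)).card = 3 := by decide
      omega
    have key : ∀ r : Fin 48, r ≠ 0 → par r = 0 → r ∈ Pset → r ∉ Rs o c 0 → False := by
      intro r hr0 hrp hrP hnr
      have hgp := child_gives o c hr0 hrp hnr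
      have hvp := Lgp hk o hp c hfull r hrP hgp
      have hne := hp _ _ (adj_child c hr0 hrp)
      rw [hval, hvp] at hne
      omega
    rcases hpi with h | h
    · exact key 2 h2p.1 h2p.2.1 h2p.2.2 h
    · exact key 3 h3p.1 h3p.2.1 h3p.2.2 h
  · have hsig : (4:Fin 48) ∉ Rs o c 0 ∨ (5:Fin 48) ∉ Rs o c 0 ∨ (6:Fin 48) ∉ Rs o c 0 := by
      by_contra hbo; push_neg at hbo
      have hsub : ({4, 5, 6, 7} : Finset (Fin 48)) ⊆ Rs o c 0 := by
        intro r hr; simp only [Finset.mem_insert, Finset.mem_singleton] at hr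
        rcases hr with rfl | rfl | rfl | rfl
        exacts [hbo.1, hbo.2.1, hbo.2.2, hmem7]
      have hcc := Finset.card_le_card hsub
      have hc4 : ({4, 5, 6, 7} : Finset (Fin 48)).card = 4 := by decide
      omega
    have key : ∀ r : Fin 48, r ≠ 0 → par r = 0 → r ∈ Sset → r ∉ Rs o c 0 → False := by
      intro r hr0 hrp hrS hnr
      have hgs := child_gives o c hr0 hrp hnr
      have hvs := Lgs hk o hp hcap c hfull r hrS hgs
      have hne := hp _ _ (adj_child c hr0 hrp)
      rw [hval, hvs] at hne
      omega
    rcases hsig with h | h | h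
    · exact key 4 h4s.1 h4s.2.1 h4s.2.2 h
    · exact key 5 h5s.1 h5s.2.1 h5s.2.2 h
    · exact key 6 h6s.1 h6s.2.1 h6s.2.2 h

end Chain

section LowerWrap

variable {k : ℕ}

lemma lower_bound (hk : 1 ≤ k) (o : GOrientation (GG k)) (hp : o.IsProper) :
    ∃ u, k + 3 ≤ o.outDeg u := by
  by_contra h
  push_neg at h
  have hcap : ∀ u, o.outDeg u ≤ k + 2 := fun u => by have := h u; omega
  obtain ⟨c, hfull⟩ := exists_good o hcap
  exact root_false hk o hp hcap c hfull

end LowerWrap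

section Mad

variable {k : ℕ}

open Classical in
/-- designation: `u` is the charged endpoint of edge `uv`. -/
def Pd : V k → V k → Prop
  | .inl (.inl i), .inl (.inr j) => ((j - i).val < k)
  | .inl (.inr j), .inl (.inl i) => ¬((j - i).val < k)
  | .inr (.inl (c,p)), .inr (.inl (c',q)) => c = c' ∧ p ≠ 0 ∧ par p = q
  | .inr (.inl (_,p)), .inr (.inr (q,_)) => p = q
  | _, _ => False

lemma Pd_asymm : ∀ u v : V k, Pd u v → Pd v u → False := by
  rintro ((i|j)|(⟨c,p⟩|⟨q,x⟩)) ((i'|j')|(⟨c',p'⟩|⟨q',x'⟩)) h1 h2 <;>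
    simp only [Pd] at h1 h2 <;> try tauto
  exact no_two_cycle _ _ h1.2.1 h1.2.2 h2.2.1 h2.2.2

lemma Pd_cover : ∀ u v : V k, (GG k).Adj u v → Pd u v ∨ Pd v u := by
  rintro ((i|j)|(⟨c,p⟩|⟨q,x⟩)) ((i'|j')|(⟨c',p'⟩|⟨q',x'⟩)) h <;>
    simp only [GG, rel, SimpleGraph.Adj] at h <;> simp only [Pd] <;> try tauto

noncomputable def enc : V k → ℕ := fun v => (Fintype.equivFin (V k) v).val

lemma enc_inj : Function.Injective (enc (k := k)) := by
  intro a b h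
  have : (Fintype.equivFin (V k)) a = (Fintype.equivFin (V k)) b := Fin.ext h
  exact (Fintype.equivFin (V k)).injective this

open Classical in
noncomputable def chg : Sym2 (V k) → V k :=
  Sym2.lift ⟨fun u v => if Pd u v then u else if Pd v u then v
      else (if enc u ≤ enc v then u else v), by
    intro a b
    by_cases h1 : Pd a b <;> by_cases h2 : Pd b a
    · exact absurd h2 (fun h2' => Pd_asymm a b h1 h2')
    · simp [h1, h2]
    · simp [h1, h2]
    · simp only [h1, h2, if_false]
      rcases le_or_gt (enc a) (enc b) with h3 | h3
      · rcases lt_or_eq_of_le h3 with h4 | h4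
        · rw [if_pos h3, if_neg (by omega)]
        · have : a = b := enc_inj h4
          subst this; simp
      · rw [if_neg (by omega), if_pos (by omega)]⟩

open Classical in
lemma chg_spec {u v : V k} (hadj : (GG k).Adj u v) :
    (chg s(u,v) = u ∧ Pd u v) ∨ (chg s(u,v) = v ∧ Pd v u) := by
  have hcov := Pd_cover u v hadj
  by_cases h1 : Pd u v
  · left
    refine ⟨?_, h1⟩
    show (if Pd u v then u else _) = u
    rw [if_pos h1]
  · have h2 := hcov.resolve_left h1
    right
    refine ⟨?_, h2⟩
    show (if Pd u v then u else if Pd v u then v else _) = v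
    rw [if_neg h1, if_pos h2]

end Mad

section MadCount

variable {k : ℕ}

noncomputable def EF (H : (GG k).Subgraph) : Finset (Sym2 (V k)) :=
  (Set.toFinite H.edgeSet).toFinset
noncomputable def VF (H : (GG k).Subgraph) : Finset (V k) :=
  (Set.toFinite H.verts).toFinset

lemma mem_EF {H : (GG k).Subgraph} {e} : e ∈ EF H ↔ e ∈ H.edgeSet :=
  Set.Finite.mem_toFinset _
lemma mem_VF {H : (GG k).Subgraph} {v} : v ∈ VF H ↔ v ∈ H.verts :=
  Set.Finite.mem_toFinset _

lemma chg_mem_VF {H : (GG k).Subgraph} {e} (he : e ∈ EF H) : chg e ∈ VF H := by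
  induction e using Sym2.inductionOn with
  | _ u v =>
    rw [mem_EF, SimpleGraph.Subgraph.mem_edgeSet] at he
    rcases chg_spec (H.adj_sub he) with ⟨h, -⟩ | ⟨h, -⟩
    · rw [h, mem_VF]; exact H.edge_vert he
    · rw [h, mem_VF]; exact H.edge_vert he.symm

lemma fiber_le (H : (GG k).Subgraph) (v₀ : V k) (S : Finset (V k))
    (hS : ∀ w, H.Adj v₀ w → Pd v₀ w → w ∈ S) :
    ((EF H).filter fun e => chg e = v₀).card ≤ S.card := by
  classical
  have key : ∀ e ∈ (EF H).filter fun e => chg e = v₀, ∃ w ∈ S, e = s(v₀, w) := by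
    intro e he
    rw [mem_filter] at he
    obtain ⟨heE, heC⟩ := he
    induction e using Sym2.inductionOn with
    | _ u v =>
      rw [mem_EF, SimpleGraph.Subgraph.mem_edgeSet] at heE
      rcases chg_spec (H.adj_sub heE) with ⟨h, hPd⟩ | ⟨h, hPd⟩
      · have hu : u = v₀ := h.symm.trans heC
        subst hu
        exact ⟨v, hS v heE hPd, rfl⟩
      · have hv : v = v₀ := h.symm.trans heC
        subst hv
        exact ⟨u, hS u heE.symm hPd, Sym2.eq_swap⟩
  apply Finset.card_le_card_of_injOn
    (fun e => if h : v₀ ∈ e then Sym2.Mem.other' h else v₀)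
  · intro e he
    obtain ⟨w, hwS, rfl⟩ := key e he
    have hv : v₀ ∈ s(v₀, w) := Sym2.mem_mk_left _ _
    beta_reduce; rw [dif_pos hv]
    have hsp := Sym2.other_spec' hv
    have hw : Sym2.Mem.other' hv = w := Sym2.congr_right.mp hsp
    rwa [hw]
  · intro e he e' he' hff
    obtain ⟨w, -, rfl⟩ := key e he
    obtain ⟨w', -, rfl⟩ := key e' he'
    have hv : v₀ ∈ s(v₀, w) := Sym2.mem_mk_left _ _
    have hv' : v₀ ∈ s(v₀, w') := Sym2.mem_mk_left _ _
    simp only at hff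
    rw [dif_pos hv, dif_pos hv'] at hff
    have h1 := Sym2.other_spec' hv
    have h2 := Sym2.other_spec' hv'
    rw [hff] at h1
    exact h1.symm.trans h2

lemma fib_lf (hk : 1 ≤ k) (H : (GG k).Subgraph) (i : Fin (mm k)) :
    ((EF H).filter fun e => chg e = lf i).card ≤ k := by
  have := fiber_le H (lf i)
    ((univ.filter fun j : Fin (mm k) => (j - i).val < k).image (rt (k := k)))
    (by
      rintro ((i'|j')|(⟨c',p'⟩|⟨q',x'⟩)) hadj hPd <;> simp only [Pd] at hPd
      exact Finset.mem_image.mpr ⟨j', by simp [hPd], rfl⟩)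
  calc ((EF H).filter fun e => chg e = lf i).card
      ≤ _ := this
    _ ≤ (univ.filter fun j : Fin (mm k) => (j - i).val < k).card := Finset.card_image_le
    _ = k := card_cond hk i

lemma fib_rt (hk : 1 ≤ k) (H : (GG k).Subgraph) (j : Fin (mm k)) :
    ((EF H).filter fun e => chg e = rt j).card ≤ k - 1 := by
  have := fiber_le H (rt j)
    ((univ.filter fun i : Fin (mm k) => ¬((j - i).val < k)).image (lf (k := k)))
    (by
      rintro ((i'|j')|(⟨c',p'⟩|⟨q',x'⟩)) hadj hPd <;> simp only [Pd] at hPd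
      exact Finset.mem_image.mpr ⟨i', by simp only [mem_filter, mem_univ, true_and]; exact hPd, rfl⟩)
  calc ((EF H).filter fun e => chg e = rt j).card
      ≤ _ := this
    _ ≤ (univ.filter fun i : Fin (mm k) => ¬((j - i).val < k)).card := Finset.card_image_le
    _ = k - 1 := card_ncond hk j

lemma fib_bb (hk : 1 ≤ k) (H : (GG k).Subgraph) (c : Fin (ss k)) (p : Fin 48) :
    ((EF H).filter fun e => chg e = bb c p).card ≤ k := by
  classical
  have := fiber_le H (bb c p)
    ((univ.image fun x : Fin (k-1) => (dd p x : V k)) ∪ {bb c (par p)})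
    (by
      rintro ((i'|j')|(⟨c',p'⟩|⟨q',x'⟩)) hadj hPd <;> simp only [Pd] at hPd
      · obtain ⟨h1, h2, h3⟩ := hPd
        subst h1
        rw [← h3]
        exact Finset.mem_union_right _ (Finset.mem_singleton_self _)
      · subst hPd
        exact Finset.mem_union_left _ (Finset.mem_image.mpr ⟨x', mem_univ _, rfl⟩))
  calc ((EF H).filter fun e => chg e = bb c p).card
      ≤ _ := this
    _ ≤ (univ.image fun x : Fin (k-1) => (dd p x : V k)).card
        + ({bb c (par p)} : Finset (V k)).card := Finset.card_union_le _ _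
    _ ≤ (k - 1) + 1 := by
        gcongr
        · calc (univ.image fun x : Fin (k-1) => (dd p x : V k)).card
              ≤ (univ : Finset (Fin (k-1))).card := Finset.card_image_le
            _ = k - 1 := by simp
        · simp
    _ ≤ k := by omega

lemma fib_dd (H : (GG k).Subgraph) (q : Fin 48) (x : Fin (k-1)) :
    ((EF H).filter fun e => chg e = dd q x).card = 0 := by
  have := fiber_le H (dd q x) ∅
    (by
      rintro ((i'|j')|(⟨c',p'⟩|⟨q',x'⟩)) hadj hPd <;> simp only [Pd] at hPd)
  simpa using this

lemma fib_any (hk : 1 ≤ k) (H : (GG k).Subgraph) (v : V k) :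
    ((EF H).filter fun e => chg e = v).card ≤ k := by
  rcases v with ((i|j)|(⟨c,p⟩|⟨q,x⟩))
  · exact fib_lf hk H i
  · exact le_trans (fib_rt hk H j) (by omega)
  · exact fib_bb hk H c p
  · rw [fib_dd H q x]; omega

end MadCount

section EdgeBound

variable {k : ℕ}

lemma edge_bound (hk : 1 ≤ k) (H : (GG k).Subgraph) (hne : H.verts.Nonempty) :
    H.edgeSet.ncard + 1 ≤ k * H.verts.ncard := by
  classical
  have hE : H.edgeSet.ncard = (EF H).card := Set.ncard_eq_toFinset_card _ _
  have hV : H.verts.ncard = (VF H).card := Set.ncard_eq_toFinset_card _ _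
  have hVpos : 0 < (VF H).card := by
    obtain ⟨v, hv⟩ := hne
    exact Finset.card_pos.mpr ⟨v, mem_VF.mpr hv⟩
  have hsum : (EF H).card = ∑ v ∈ VF H, ((EF H).filter fun e => chg e = v).card :=
    Finset.card_eq_sum_card_fiberwise (fun e he => chg_mem_VF he)
  rw [hE, hV]
  by_cases hbad : (∃ j : Fin (mm k), rt j ∈ VF H) ∨
      (∃ (q : Fin 48) (x : Fin (k-1)), (dd q x : V k) ∈ VF H)
  · -- there is a vertex whose fiber is at most k-1
    obtain ⟨w₀, hw₀, hcap₀⟩ : ∃ w₀ ∈ VF H, ((EF H).filter fun e => chg e = w₀).card ≤ k - 1 := by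
      rcases hbad with ⟨j, hj⟩ | ⟨q, x, hqx⟩
      · exact ⟨rt j, hj, fib_rt hk H j⟩
      · exact ⟨dd q x, hqx, by rw [fib_dd H q x]; omega⟩
    have hsum2 : (EF H).card = ((EF H).filter fun e => chg e = w₀).card
        + ∑ v ∈ (VF H).erase w₀, ((EF H).filter fun e => chg e = v).card := by
      rw [hsum]; exact (Finset.add_sum_erase _ _ hw₀).symm
    have hrest : ∑ v ∈ (VF H).erase w₀, ((EF H).filter fun e => chg e = v).card
        ≤ ((VF H).card - 1) * k := by
      have := Finset.sum_le_card_nsmul ((VF H).erase w₀)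
        (fun v => ((EF H).filter fun e => chg e = v).card) k
        (fun v _ => fib_any hk H v)
      rw [Finset.card_erase_of_mem hw₀] at this
      simpa [smul_eq_mul] using this
    have hfin : (k - 1) + ((VF H).card - 1) * k + 1 ≤ k * (VF H).card := by
      obtain ⟨c', hc'⟩ : ∃ c', (VF H).card = c' + 1 := ⟨(VF H).card - 1, by omega⟩
      rw [hc']
      have h2 : (c' + 1 - 1) * k = c' * k := by norm_num
      rw [h2]
      have h3 : k * (c' + 1) = c' * k + k := by ring
      rw [h3]
      omega
    omega
  · push_neg at hbad
    obtain ⟨hnr, hnd⟩ := hbad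
    -- left fibers vanish
    have hfl : ∀ i : Fin (mm k), ((EF H).filter fun e => chg e = lf i).card = 0 := by
      intro i
      have := fiber_le H (lf i) ∅ (by
        rintro ((i'|j')|(⟨c',p'⟩|⟨q',x'⟩)) hadj hPd <;> simp only [Pd] at hPd
        exact absurd (mem_VF.mpr (H.edge_vert hadj.symm)) (hnr j'))
      simpa using this
    by_cases hbase : ∃ b : Fin (ss k) × Fin 48, (.inr (.inl b) : V k) ∈ VF H
    · -- minimal-depth base vertex has empty fiber
      set BF : Finset (Fin (ss k) × Fin 48) :=
        univ.filter (fun b => (.inr (.inl b) : V k) ∈ VF H) with hBF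
      have hBFne : BF.Nonempty := by
        obtain ⟨b, hb⟩ := hbase
        exact ⟨b, by simp [hBF, hb]⟩
      obtain ⟨b₀, hb₀, hmin⟩ := Finset.exists_min_image BF (fun b => dep b.2) hBFne
      have hb₀V : (.inr (.inl b₀) : V k) ∈ VF H := by
        simp only [hBF, mem_filter] at hb₀; exact hb₀.2
      -- fiber of b₀ is empty
      have hf0 : ((EF H).filter fun e => chg e = .inr (.inl b₀)).card = 0 := by
        obtain ⟨c₀, p₀⟩ := b₀
        have := fiber_le H (bb c₀ p₀) ∅ (by
          rintro ((i'|j')|(⟨c',p'⟩|⟨q',x'⟩)) hadj hPd <;> simp only [Pd] at hPd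
          · obtain ⟨h1, h2, h3⟩ := hPd
            exfalso
            have hw : (bb c' p' : V k) ∈ VF H := mem_VF.mpr (H.edge_vert hadj.symm)
            have hwBF : (c', p') ∈ BF := by simp [hBF, hw]
            have hle : dep p₀ ≤ dep p' := hmin _ hwBF
            have hlt : dep (par p₀) < dep p₀ := dep_par p₀ h2
            rw [← h3] at hle
            omega
          · exfalso
            exact absurd (mem_VF.mpr (H.edge_vert hadj.symm)) (hnd q' x'))
        simpa using this
      -- every other fiber is ≤ 1
      have hf1 : ∀ v ∈ (VF H).erase (.inr (.inl b₀)), ((EF H).filter fun e => chg e = v).card ≤ 1 := by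
        intro v hv
        have hvV := Finset.mem_of_mem_erase hv
        rcases v with ((i|j)|(⟨c,p⟩|⟨q,x⟩))
        · rw [hfl i]; omega
        · exact absurd hvV (hnr j)
        · have := fiber_le H (bb c p) {bb c (par p)} (by
            rintro ((i'|j')|(⟨c',p'⟩|⟨q',x'⟩)) hadj hPd <;> simp only [Pd] at hPd
            · obtain ⟨h1, h2, h3⟩ := hPd
              subst h1; rw [← h3]
              exact Finset.mem_singleton_self _
            · exact absurd (mem_VF.mpr (H.edge_vert hadj.symm)) (hnd q' x'))
          simpa using this
        · exact absurd hvV (hnd q x)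
      have hsum2 : (EF H).card = ((EF H).filter fun e => chg e = .inr (.inl b₀)).card
          + ∑ v ∈ (VF H).erase (.inr (.inl b₀)), ((EF H).filter fun e => chg e = v).card := by
        rw [hsum]; exact (Finset.add_sum_erase _ _ hb₀V).symm
      have hrest : ∑ v ∈ (VF H).erase (.inr (.inl b₀)), ((EF H).filter fun e => chg e = v).card
          ≤ (VF H).card - 1 := by
        have := Finset.sum_le_card_nsmul ((VF H).erase (.inr (.inl b₀)))
          (fun v => ((EF H).filter fun e => chg e = v).card) 1 hf1
        rw [Finset.card_erase_of_mem hb₀V] at this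
        simpa using this
      have hfin : (VF H).card ≤ k * (VF H).card := Nat.le_mul_of_pos_left _ hk
      omega
    · -- no base vertices: every vertex of H is a K-left, no edges at all
      push_neg at hbase
      have hall : ∀ v ∈ VF H, ((EF H).filter fun e => chg e = v).card = 0 := by
        intro v hv
        rcases v with ((i|j)|(⟨c,p⟩|⟨q,x⟩))
        · exact hfl i
        · exact absurd hv (hnr j)
        · exact absurd hv (hbase (c, p))
        · exact absurd hv (hnd q x)
      have hzero : (EF H).card = 0 := by
        rw [hsum]
        exact Finset.sum_eq_zero hall
      rw [hzero]
      have := Nat.mul_pos (by omega : 0 < k) hVpos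
      omega

end EdgeBound

section MadBounds

variable {k : ℕ}

/-- the set appearing in the definition of `mad`. -/
def madSet (G : SimpleGraph (V k)) : Set ℝ :=
  {x : ℝ | ∃ H : G.Subgraph, H.verts.Nonempty ∧
    x = 2 * H.edgeSet.ncard / H.verts.ncard}

lemma mad_eq_sSup (G : SimpleGraph (V k)) : mad G = sSup (madSet G) := rfl

instance : Nonempty (V k) := ⟨.inr (.inl (⟨0, by unfold ss; omega⟩, 0))⟩

lemma bound_all (hk : 1 ≤ k) :
    ∀ x ∈ madSet (GG k), x ≤ 2*(k:ℝ) - 2/(Fintype.card (V k)) := by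
  rintro x ⟨H, hne, rfl⟩
  have he := edge_bound hk H hne
  have hv1 : 0 < H.verts.ncard := (Set.ncard_pos (Set.toFinite _)).mpr hne
  have hvN : H.verts.ncard ≤ Fintype.card (V k) := by
    calc H.verts.ncard ≤ (Set.univ : Set (V k)).ncard :=
          Set.ncard_le_ncard (Set.subset_univ _) (Set.toFinite _)
      _ = Fintype.card (V k) := by rw [Set.ncard_univ, Nat.card_eq_fintype_card]
  have hN : (0:ℝ) < Fintype.card (V k) := by
    have := Fintype.card_pos (α := V k)
    exact_mod_cast this
  have hvR : (0:ℝ) < H.verts.ncard := by exact_mod_cast hv1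
  have heR : (H.edgeSet.ncard : ℝ) ≤ k * H.verts.ncard - 1 := by
    have : (H.edgeSet.ncard : ℝ) + 1 ≤ k * H.verts.ncard := by exact_mod_cast he
    linarith
  calc 2 * (H.edgeSet.ncard : ℝ) / H.verts.ncard
      ≤ 2 * ((k : ℝ) * H.verts.ncard - 1) / H.verts.ncard := by gcongr
    _ = 2*(k:ℝ) - 2/(H.verts.ncard) := by field_simp
    _ ≤ 2*(k:ℝ) - 2/(Fintype.card (V k)) := by
        have hvNR : (H.verts.ncard : ℝ) ≤ (Fintype.card (V k) : ℝ) := by exact_mod_cast hvN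
        gcongr

/-- the complete bipartite part as a subgraph. -/
def HK : (GG k).Subgraph where
  verts := Set.range (Sum.inl)
  Adj u v := (∃ i j, u = lf i ∧ v = rt j) ∨ (∃ i j, u = rt j ∧ v = lf i)
  adj_sub := by
    rintro u v (⟨i,j,rfl,rfl⟩|⟨i,j,rfl,rfl⟩) <;> (rw [adjGG]; trivial)
  edge_vert := by
    rintro u v (⟨i,j,rfl,rfl⟩|⟨i,j,rfl,rfl⟩) <;> exact ⟨_, rfl⟩
  symm := by
    constructor
    rintro u v (⟨i,j,rfl,rfl⟩|⟨i,j,rfl,rfl⟩)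
    · exact Or.inr ⟨i,j,rfl,rfl⟩
    · exact Or.inl ⟨i,j,rfl,rfl⟩

lemma HK_verts_ncard : (HK (k := k)).verts.ncard = 2 * mm k := by
  show (Set.range (Sum.inl : (Fin (mm k) ⊕ Fin (mm k)) → V k)).ncard = 2 * mm k
  rw [← Set.image_univ, Set.ncard_image_of_injective _ Sum.inl_injective,
    Set.ncard_univ, Nat.card_eq_fintype_card, Fintype.card_sum, Fintype.card_fin]
  omega

lemma HK_edge_ncard : (HK (k := k)).edgeSet.ncard = mm k * mm k := by
  classical
  have himg : (HK (k := k)).edgeSet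
      = (fun ij : Fin (mm k) × Fin (mm k) => s(lf ij.1, rt ij.2)) '' Set.univ := by
    ext e
    induction e using Sym2.inductionOn with
    | _ u v =>
      rw [SimpleGraph.Subgraph.mem_edgeSet]
      constructor
      · rintro (⟨i,j,rfl,rfl⟩|⟨i,j,rfl,rfl⟩)
        · exact ⟨(i,j), Set.mem_univ _, rfl⟩
        · exact ⟨(i,j), Set.mem_univ _, Sym2.eq_swap⟩
      · rintro ⟨⟨i,j⟩, -, he⟩
        rw [Sym2.eq_iff] at he
        rcases he with ⟨h1, h2⟩ | ⟨h1, h2⟩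
        · exact Or.inl ⟨i, j, h1.symm, h2.symm⟩
        · exact Or.inr ⟨i, j, h2.symm, h1.symm⟩
  rw [himg, Set.ncard_image_of_injective _ ?_, Set.ncard_univ,
    Nat.card_eq_fintype_card, Fintype.card_prod, Fintype.card_fin]
  · intro a b hab
    simp only [Sym2.eq_iff] at hab
    rcases hab with ⟨h1, h2⟩ | ⟨h1, h2⟩
    · have h1' : a.1 = b.1 := by simpa using h1
      have h2' : a.2 = b.2 := by simpa using h2
      exact Prod.ext h1' h2'
    · exact absurd h1 (by simp)

lemma mem_madSet_HK (hk : 1 ≤ k) : ((mm k : ℝ)) ∈ madSet (GG k) := by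
  refine ⟨HK, ⟨lf ⟨0, by unfold mm; omega⟩, ⟨_, rfl⟩⟩, ?_⟩
  rw [HK_verts_ncard, HK_edge_ncard]
  have hm : (0:ℝ) < mm k := by
    have : 0 < mm k := by unfold mm; omega
    exact_mod_cast this
  push_cast
  field_simp

lemma mad_big (hk : 1 ≤ k) : 2*(k:ℝ) - 2 < mad (GG k) := by
  have hmem := mem_madSet_HK (k := k) hk
  have hbdd : BddAbove (madSet (GG k)) :=
    ⟨2*(k:ℝ) - 2/(Fintype.card (V k)), fun x hx => bound_all hk x hx⟩
  have hle : (mm k : ℝ) ≤ mad (GG k) := le_csSup hbdd hmem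
  have hmm : (mm k : ℝ) = 2*(k:ℝ) - 1 := by
    have : mm k = 2*k - 1 := rfl
    rw [this]
    have h2 : (1:ℕ) ≤ 2*k := by omega
    push_cast [Nat.cast_sub h2]
    ring
  rw [hmm] at hle
  linarith

lemma mad_small (hk : 1 ≤ k) : mad (GG k) < 2*(k:ℝ) := by
  have hne : (madSet (GG k)).Nonempty := ⟨_, mem_madSet_HK hk⟩
  have hN : (0:ℝ) < Fintype.card (V k) := by
    have := Fintype.card_pos (α := V k)
    exact_mod_cast this
  have hle : mad (GG k) ≤ 2*(k:ℝ) - 2/(Fintype.card (V k)) :=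
    csSup_le hne (bound_all hk)
  have : (0:ℝ) < 2/(Fintype.card (V k)) := by positivity
  linarith

end MadBounds

section Color

variable {k : ℕ}

def col : V k → Fin 2
  | .inl (.inl _) => 0
  | .inl (.inr _) => 1
  | .inr (.inl (_,p)) => ⟨dep p % 2, by omega⟩
  | .inr (.inr (q,_)) => ⟨(dep q + 1) % 2, by omega⟩

lemma colorable2 : (GG k).Colorable 2 := by
  refine ⟨SimpleGraph.Coloring.mk col ?_⟩
  rintro ((i|j)|(⟨c,p⟩|⟨q,x⟩)) ((i'|j')|(⟨c',p'⟩|⟨q',x'⟩)) hadj <;>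
    simp only [GG, rel, SimpleGraph.Adj] at hadj <;>
    simp only [col, ne_eq, Fin.mk.injEq, Fin.ext_iff]
  · simp
  · simp
  · obtain ⟨-, h⟩ := hadj
    rcases h with ⟨h1, h2⟩ | ⟨h1, h2⟩
    · have := dep_mod_par _ h1; rw [h2] at this; simpa using this
    · have := dep_mod_par _ h1; rw [h2] at this; omega
  · subst hadj; omega
  · subst hadj; omega

end Color

section Transport

lemma card_filter_equiv {A B : Type*} [Fintype A] [Fintype B] (e : A ≃ B)
    (p : B → Prop) [DecidablePred p] :
    (univ.filter fun a => p (e a)).card = (univ.filter p).card := by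
  apply Finset.card_nbij' (fun a => e a) (fun b => e.symm b)
  · intro a ha; simp only [mem_coe, mem_filter, mem_univ, true_and] at *; exact ha
  · intro b hb; simp only [mem_coe, mem_filter, mem_univ, true_and] at *; simpa using hb
  · intro a _; simp
  · intro b _; simp

variable {A B : Type*} [Fintype A] [Fintype B] [DecidableEq A] [DecidableEq B]

/-- push a subgraph through an isomorphism. -/
def mapSub (e : A ≃ B) (G : SimpleGraph A) (G' : SimpleGraph B)
    (hAdj : ∀ a b, G'.Adj (e a) (e b) ↔ G.Adj a b) (H : G.Subgraph) : G'.Subgraph where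
  verts := e '' H.verts
  Adj := fun a b => H.Adj (e.symm a) (e.symm b)
  adj_sub := by
    intro a b h
    have h2 := H.adj_sub h
    have := (hAdj (e.symm a) (e.symm b)).mpr h2
    simpa using this
  edge_vert := by
    intro a b h
    exact ⟨_, H.edge_vert h, e.apply_symm_apply a⟩
  symm := by
    constructor
    intro a b h
    exact H.symm.symm _ _ h

lemma mapSub_verts_ncard (e : A ≃ B) (G : SimpleGraph A) (G' : SimpleGraph B)
    (hAdj : ∀ a b, G'.Adj (e a) (e b) ↔ G.Adj a b) (H : G.Subgraph) :
    (mapSub e G G' hAdj H).verts.ncard = H.verts.ncard := by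
  show (e '' H.verts).ncard = _
  exact Set.ncard_image_of_injective _ e.injective

lemma mapSub_edge_ncard (e : A ≃ B) (G : SimpleGraph A) (G' : SimpleGraph B)
    (hAdj : ∀ a b, G'.Adj (e a) (e b) ↔ G.Adj a b) (H : G.Subgraph) :
    (mapSub e G G' hAdj H).edgeSet.ncard = H.edgeSet.ncard := by
  have himg : (mapSub e G G' hAdj H).edgeSet = (Sym2.map e) '' H.edgeSet := by
    ext e₀
    induction e₀ using Sym2.inductionOn with
    | _ a b =>
      rw [SimpleGraph.Subgraph.mem_edgeSet]
      constructor
      · intro h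
        refine ⟨s(e.symm a, e.symm b), SimpleGraph.Subgraph.mem_edgeSet.mpr h, ?_⟩
        simp [Sym2.map_pair_eq]
      · rintro ⟨e₁, he₁, hmap⟩
        induction e₁ using Sym2.inductionOn with
        | _ u v =>
          rw [SimpleGraph.Subgraph.mem_edgeSet] at he₁
          rw [Sym2.map_pair_eq, Sym2.eq_iff] at hmap
          show H.Adj (e.symm a) (e.symm b)
          rcases hmap with ⟨h1, h2⟩ | ⟨h1, h2⟩
          · rw [← h1, ← h2]; simpa using he₁
          · rw [← h1, ← h2]; simpa using he₁.symm
  rw [himg]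
  exact Set.ncard_image_of_injective _ (Sym2.map.injective e.injective)

lemma madSet_sub (e : A ≃ B) (G : SimpleGraph A) (G' : SimpleGraph B)
    (hAdj : ∀ a b, G'.Adj (e a) (e b) ↔ G.Adj a b) :
    {x : ℝ | ∃ H : G.Subgraph, H.verts.Nonempty ∧
      x = 2 * H.edgeSet.ncard / H.verts.ncard}
    ⊆ {x : ℝ | ∃ H : G'.Subgraph, H.verts.Nonempty ∧
      x = 2 * H.edgeSet.ncard / H.verts.ncard} := by
  rintro x ⟨H, hne, rfl⟩
  refine ⟨mapSub e G G' hAdj H, ?_, ?_⟩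
  · obtain ⟨v, hv⟩ := hne
    exact ⟨e v, ⟨v, hv, rfl⟩⟩
  · rw [mapSub_verts_ncard, mapSub_edge_ncard]

lemma mad_transfer (e : A ≃ B) (G : SimpleGraph A) (G' : SimpleGraph B)
    (hAdj : ∀ a b, G'.Adj (e a) (e b) ↔ G.Adj a b) : mad G' = mad G := by
  unfold mad
  congr 1
  apply le_antisymm
  · have hrev : ∀ a b, G.Adj (e.symm a) (e.symm b) ↔ G'.Adj a b := by
      intro a b
      have := hAdj (e.symm a) (e.symm b)
      constructor
      · intro h
        have h2 := this.mpr h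
        simpa using h2
      · intro h
        apply this.mp
        simpa using h
    have := madSet_sub e.symm G' G hrev
    intro x hx
    exact this hx
  · exact madSet_sub e G G' hAdj

/-- transport an orientation through an isomorphism. -/
def mapOri (e : A ≃ B) (G : SimpleGraph A) (G' : SimpleGraph B)
    (hAdj : ∀ a b, G'.Adj (e a) (e b) ↔ G.Adj a b) (o : GOrientation G) :
    GOrientation G' where
  dir := fun a b => o.dir (e.symm a) (e.symm b)
  adj_iff := by
    intro a b
    have h1 : G'.Adj a b ↔ G.Adj (e.symm a) (e.symm b) := by
      have := hAdj (e.symm a) (e.symm b)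
      simpa using this
    rw [h1, o.adj_iff]
  not_both := fun a b h => o.not_both _ _ h

lemma mapOri_outDeg (e : A ≃ B) (G : SimpleGraph A) (G' : SimpleGraph B)
    (hAdj : ∀ a b, G'.Adj (e a) (e b) ↔ G.Adj a b) (o : GOrientation G) (a : B) :
    (mapOri e G G' hAdj o).outDeg a = o.outDeg (e.symm a) := by
  unfold GOrientation.outDeg mapOri
  exact card_filter_equiv e.symm (fun v => o.dir (e.symm a) v = true)

lemma mapOri_proper (e : A ≃ B) (G : SimpleGraph A) (G' : SimpleGraph B)
    (hAdj : ∀ a b, G'.Adj (e a) (e b) ↔ G.Adj a b) (o : GOrientation G)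
    (hp : o.IsProper) : (mapOri e G G' hAdj o).IsProper := by
  intro a b hadj
  rw [mapOri_outDeg, mapOri_outDeg]
  apply hp
  have := (hAdj (e.symm a) (e.symm b))
  rw [← this]
  simpa using hadj

end Transport

end Stmt17

open Stmt17 in
theorem stmt17 (k : ℕ) (hk : 1 ≤ k) :
    ∃ (n : ℕ) (G : SimpleGraph (Fin n)),
      G.Colorable 2 ∧
      (2 * (k : ℝ) - 2 < mad G ∧ mad G < 2 * (k : ℝ)) ∧
      (∃ o : GOrientation G, o.IsProper ∧ ∀ u, o.outDeg u ≤ k + 3) ∧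
      (∀ o : GOrientation G, o.IsProper → ∃ u, k + 3 ≤ o.outDeg u) := by
  classical
  set n := Fintype.card (V k) with hn
  set eqv : V k ≃ Fin n := Fintype.equivFin (V k) with heqv
  set GF : SimpleGraph (Fin n) :=
    { Adj := fun a b => (GG k).Adj (eqv.symm a) (eqv.symm b),
      symm := ⟨fun a b h => (GG k).symm.symm _ _ h⟩,
      loopless := ⟨fun a h => (GG k).irrefl h⟩ } with hGF
  have hAdj : ∀ a b, GF.Adj (eqv a) (eqv b) ↔ (GG k).Adj a b := by
    intro a b
    show (GG k).Adj (eqv.symm (eqv a)) (eqv.symm (eqv b)) ↔ _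
    simp
  refine ⟨n, GF, ?_, ?_, ?_, ?_⟩
  · -- colorable
    obtain ⟨f⟩ := colorable2 (k := k)
    exact ⟨SimpleGraph.Coloring.mk (fun a => f (eqv.symm a))
      (fun {a b} hadj => f.valid hadj)⟩
  · -- mad
    rw [mad_transfer eqv (GG k) GF hAdj]
    exact ⟨mad_big hk, mad_small hk⟩
  · -- upper bound
    refine ⟨mapOri eqv (GG k) GF hAdj (oUp k), mapOri_proper _ _ _ hAdj _ (oUp_proper hk), ?_⟩
    intro a
    rw [mapOri_outDeg]
    exact oUp_cap hk _
  · -- lower bound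
    intro o' hp'
    have hAdj' : ∀ a b, (GG k).Adj (eqv.symm a) (eqv.symm b) ↔ GF.Adj a b := by
      intro a b
      exact Iff.rfl
    set o : GOrientation (GG k) := mapOri eqv.symm GF (GG k) hAdj' o' with ho
    have hpo : o.IsProper := mapOri_proper _ _ _ hAdj' o' hp'
    obtain ⟨u, hu⟩ := lower_bound hk o hpo
    refine ⟨eqv u, ?_⟩
    have : o.outDeg u = o'.outDeg (eqv u) := by
      rw [ho, mapOri_outDeg]
      simp
    omega
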